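/- arXiv:1906.00329 — 2 statements merged into one kernel-verified Lean document; each statement's English description precedes it below -/
import Mathlib

section
/- Hytönen–Kairema dyadic decomposition: Let (X, ρ, μ) be a space of homogeneous type with quasimetric constant κ and doubling constant D. Then there exist constants 𝔠 > 1, 0 < δ < 1/100 and 0 < ε < 1, a family 𝒟 = ⋃_{k∈ℤ} 𝒟_k of measurable subsets of X, and points x_c(Q) ∈ X for Q ∈ 𝒟, such that: (1) X = ⋃_{Q∈𝒟_k} Q for every k ∈ ℤ; (2) if Q₁, Q₂ ∈ 𝒟 and Q₁ ∩ Q₂ ≠ ∅, then Q₁ ⊆ Q₂ or Q₂ ⊆ Q₁; (3) every Q ∈ 𝒟_k contains at least one element of 𝒟_{k+1}; (4) every Q ∈ 𝒟_k is contained in exactly one element of 𝒟_{k−1}; (5) if Q₂ ∈ 𝒟_{k+1} and Q₂ ⊆ Q₁ ∈ 𝒟_k, then μ(Q₂) ≥ ε·μ(Q₁); (6) B(x_c(Q), δ^k) ⊆ Q ⊆ B(x_c(Q), 𝔠·δ^k) for every Q ∈ 𝒟_k. -/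
open MeasureTheory Set

set_option linter.unusedSectionVars false
set_option maxHeartbeats 1000000

noncomputable section HKDev
open Classical

variable {X : Type*}

def HKanc (par : ℤ → X → X) : ℕ → ℤ → X → X
  | 0, _, b => b
  | (n+1), m, b => par (m - n - 1) (HKanc par n m b)

def HKancZ (par : ℤ → X → X) (m j : ℤ) (b : X) : X := HKanc par (m - j).toNat m b

lemma HKanc_succ (par : ℤ → X → X) (n : ℕ) (m : ℤ) (b : X) :
    HKanc par (n+1) m b = par (m - n - 1) (HKanc par n m b) := rfl

lemma HKanc_top (par : ℤ → X → X) :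
    ∀ (n : ℕ) (m : ℤ) (b : X), HKanc par (n+1) m b = HKanc par n (m-1) (par (m-1) b) := by
  intro n
  induction n with
  | zero => intro m b; simp [HKanc]
  | succ n ih =>
    intro m b
    rw [HKanc_succ, ih m b, HKanc_succ]
    have : m - 1 - (n : ℤ) - 1 = m - (n+1 : ℕ) - 1 := by push_cast; ring
    rw [this]

lemma HKancZ_self (par : ℤ → X → X) (m : ℤ) (b : X) : HKancZ par m m b = b := by
  simp [HKancZ, HKanc]

lemma HKancZ_bot (par : ℤ → X → X) {m j : ℤ} (h : j + 1 ≤ m) (b : X) :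
    HKancZ par m j b = par j (HKancZ par m (j+1) b) := by
  have h1 : (m - j).toNat = (m - (j+1)).toNat + 1 := by omega
  rw [HKancZ, h1, HKanc_succ, HKancZ]
  have h2 : m - ((m - (j+1)).toNat : ℤ) - 1 = j := by omega
  rw [h2]

lemma HKancZ_top (par : ℤ → X → X) {m j : ℤ} (h : j + 1 ≤ m) (b : X) :
    HKancZ par m j b = HKancZ par (m-1) j (par (m-1) b) := by
  have h1 : (m - j).toNat = ((m-1) - j).toNat + 1 := by omega
  rw [HKancZ, h1, HKanc_top, HKancZ]

lemma HKstab {α : Type*} (T : ℕ → Set α) (hdec : ∀ n, T (n+1) ⊆ T n)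
    (hne : ∀ n, (T n).Nonempty) (hfin : (T 0).Finite) : (⋂ n, T n).Nonempty := by
  have hmono : ∀ m n : ℕ, m ≤ n → T n ⊆ T m := by
    intro m n h
    induction n, h using Nat.le_induction with
    | base => exact subset_rfl
    | succ n hn ih => exact (hdec n).trans ih
  have hkey : ∃ k : ℕ, ∃ n : ℕ, (T n).ncard = k := ⟨(T 0).ncard, 0, rfl⟩
  obtain ⟨n₀, hn₀⟩ := Nat.find_spec hkey
  have hmin : ∀ n, Nat.find hkey ≤ (T n).ncard := by
    intro n
    by_contra hlt
    exact Nat.find_min hkey (by omega) ⟨n, rfl⟩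
  obtain ⟨x, hx⟩ := hne n₀
  have heq : ∀ m, n₀ ≤ m → T m = T n₀ := by
    intro m hm
    refine Set.eq_of_subset_of_ncard_le (hmono n₀ m hm) ?_ (hfin.subset (hmono 0 n₀ (by omega)))
    rw [hn₀]; exact hmin m
  refine ⟨x, ?_⟩
  rw [Set.mem_iInter]
  intro n
  rcases le_total n n₀ with h | h
  · exact hmono n n₀ h hx
  · rw [heq n h]; exact hx

lemma HKnet_exists [Nonempty X] (ρ : X → X → ℝ) (hρ_eq : ∀ x y, ρ x y = 0 ↔ x = y)
    (hρ_symm : ∀ x y, ρ x y = ρ y x) (r : ℝ) (hr : 0 < r) :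
    ∃ A : Set X, (∀ a ∈ A, ∀ b ∈ A, a ≠ b → r ≤ ρ a b) ∧ ∀ x, ∃ a ∈ A, ρ x a < r := by
  set S : Set (Set X) := {s | ∀ a ∈ s, ∀ b ∈ s, a ≠ b → r ≤ ρ a b} with hS
  obtain ⟨m, hmax⟩ := zorn_subset S (by
    intro c hcS hchain
    refine ⟨⋃₀ c, ?_, fun s hs => subset_sUnion_of_mem hs⟩
    intro a ha b hb hab
    obtain ⟨s, hsc, has⟩ := ha
    obtain ⟨t, htc, hbt⟩ := hb
    rcases hchain.total hsc htc with h | h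
    · exact hcS htc a (h has) b hbt hab
    · exact hcS hsc a has b (h hbt) hab)
  have hmS : m ∈ S := hmax.1
  refine ⟨m, hmS, ?_⟩
  intro x
  by_contra hx
  push_neg at hx
  have hxm : x ∉ m := by
    intro hxm
    have := hx x hxm
    rw [(hρ_eq x x).mpr rfl] at this
    exact absurd hr (not_lt.mpr this)
  have hins : insert x m ∈ S := by
    intro a ha b hb hab
    rcases ha with rfl | ha <;> rcases hb with rfl | hb
    · exact absurd rfl hab
    · exact hx b hb
    · rw [hρ_symm]; exact hx a ha
    · exact hmS a ha b hb hab
  have : insert x m ⊆ m := hmax.2 hins (subset_insert x m)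
  exact hxm (this (mem_insert x m))


def HKAdm (ρ : X → X → ℝ) (c δ : ℝ) (j : ℤ) (a x : X) : Prop := ρ x a < c * δ ^ j

def HKExt (ρ : X → X → ℝ) (c δ : ℝ) (A : ℤ → Set X) (par : ℤ → X → X) (j : ℤ) (a x : X) : Prop :=
  ∀ m : ℤ, j ≤ m → ∃ b ∈ A m, HKAdm ρ c δ m b x ∧ HKancZ par m j b = a

def HKGood (ρ : X → X → ℝ) (c δ : ℝ) (A : ℤ → Set X) (par : ℤ → X → X) (j : ℤ) (a x : X) : Prop :=
  HKAdm ρ c δ j a x ∧ HKExt ρ c δ A par j a x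

section GoodLemmas

variable {ρ : X → X → ℝ} {κ δ M c : ℝ} {A : ℤ → Set X} {par : ℤ → X → X}
variable (hρ_symm : ∀ x y, ρ x y = ρ y x)
variable (hρ_tri : ∀ x y z, ρ x y ≤ κ * (ρ x z + ρ z y))
variable (hκ : 1 ≤ κ) (hδ0 : 0 < δ) (hMc : M ≤ c) (h1 : κ * (c * δ + M) ≤ c)
variable (hA_sep : ∀ j : ℤ, ∀ a ∈ A j, ∀ b ∈ A j, a ≠ b → M * δ ^ j ≤ ρ a b)
variable (hA_cov : ∀ (j : ℤ) (x : X), ∃ a ∈ A j, ρ x a < M * δ ^ j)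
variable (hpar : ∀ j : ℤ, ∀ b ∈ A (j+1), par j b ∈ A j ∧ ρ (par j b) b < M * δ ^ j ∧
    ∀ a ∈ A j, ρ a b < M * δ ^ j / (2*κ) → a = par j b)

include hρ_symm hρ_tri hκ hδ0 h1 hpar in
lemma HKadm_step {j : ℤ} {b x : X} (hb : b ∈ A (j+1)) (h : HKAdm ρ c δ (j+1) b x) :
    HKAdm ρ c δ j (par j b) x := by
  have hκ0 : (0:ℝ) < κ := lt_of_lt_of_le one_pos hκ
  have hδj : (0:ℝ) < δ ^ j := zpow_pos hδ0 j
  have e1 : ρ x b < c * δ * δ ^ j := by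
    have hz : (δ:ℝ) ^ (j+1) = δ ^ j * δ := zpow_add_one₀ (ne_of_gt hδ0) j
    have := h
    rw [HKAdm, hz] at this
    linarith [this]
  have e2 : ρ (par j b) b < M * δ ^ j := (hpar j b hb).2.1
  have e3 : ρ x (par j b) ≤ κ * (ρ x b + ρ b (par j b)) := hρ_tri x (par j b) b
  have e4 : ρ b (par j b) = ρ (par j b) b := hρ_symm b (par j b)
  have key : κ * (c * δ + M) * δ ^ j ≤ c * δ ^ j :=
    mul_le_mul_of_nonneg_right h1 hδj.le
  show ρ x (par j b) < c * δ ^ j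
  nlinarith [mul_lt_mul_of_pos_left e1 hκ0, mul_lt_mul_of_pos_left e2 hκ0]

lemma HKgood_mem {j : ℤ} {a x : X} (hg : HKGood ρ c δ A par j a x) :
    a ∈ A j ∧ HKAdm ρ c δ j a x := by
  obtain ⟨b, hbA, _, hanc⟩ := hg.2 j le_rfl
  rw [HKancZ_self] at hanc
  exact ⟨hanc ▸ hbA, hg.1⟩

include hρ_symm hρ_tri hκ hδ0 h1 hpar in
lemma HKanc_lift : ∀ (n : ℕ) (m : ℤ) (b x : X), b ∈ A m → HKAdm ρ c δ m b x →
    HKanc par n m b ∈ A (m - n) ∧ HKAdm ρ c δ (m - n) (HKanc par n m b) x := by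
  intro n
  induction n with
  | zero =>
    intro m b x hb h
    simpa using ⟨hb, h⟩
  | succ n ih =>
    intro m b x hb h
    obtain ⟨hmem, hadm⟩ := ih m b x hb h
    have hm : m - (n:ℤ) = (m - (n:ℤ) - 1) + 1 := by ring
    have hmem' : HKanc par n m b ∈ A ((m - (n:ℤ) - 1) + 1) := by rw [← hm]; exact hmem
    have hadm' : HKAdm ρ c δ ((m - (n:ℤ) - 1) + 1) (HKanc par n m b) x := by rw [← hm]; exact hadm
    have hcast : m - ((n+1 : ℕ) : ℤ) = m - (n:ℤ) - 1 := by push_cast; ring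
    rw [HKanc_succ, hcast]
    exact ⟨(hpar _ _ hmem').1, HKadm_step hρ_symm hρ_tri hκ hδ0 h1 hpar hmem' hadm'⟩

include hρ_symm hρ_tri hκ hδ0 h1 hpar in
lemma HKancZ_lift {m j : ℤ} (hjm : j ≤ m) {b x : X} (hb : b ∈ A m) (h : HKAdm ρ c δ m b x) :
    HKancZ par m j b ∈ A j ∧ HKAdm ρ c δ j (HKancZ par m j b) x := by
  have := HKanc_lift hρ_symm hρ_tri hκ hδ0 h1 hpar (m - j).toNat m b x hb h
  have hcast : m - (((m - j).toNat : ℕ) : ℤ) = j := by omega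
  rw [hcast] at this
  exact this

include hρ_symm hρ_tri hκ hδ0 h1 hpar in
lemma HKgood_par {j : ℤ} {b x : X} (hg : HKGood ρ c δ A par (j+1) b x) :
    HKGood ρ c δ A par j (par j b) x := by
  have hbA : b ∈ A (j+1) := (HKgood_mem hg).1
  refine ⟨HKadm_step hρ_symm hρ_tri hκ hδ0 h1 hpar hbA hg.1, ?_⟩
  intro m hm
  rcases eq_or_lt_of_le hm with rfl | hlt
  · exact ⟨par j b, (hpar j b hbA).1,
      HKadm_step hρ_symm hρ_tri hκ hδ0 h1 hpar hbA hg.1, HKancZ_self par j _⟩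
  · have hm' : j + 1 ≤ m := hlt
    obtain ⟨cc, hccA, hccadm, hanc⟩ := hg.2 m hm'
    exact ⟨cc, hccA, hccadm, by rw [HKancZ_bot par hm', hanc]⟩

include hρ_symm hρ_tri hκ hδ0 h1 hpar in
lemma HKgood_anc : ∀ (n : ℕ) (m : ℤ) (b x : X), HKGood ρ c δ A par m b x →
    HKGood ρ c δ A par (m - n) (HKanc par n m b) x := by
  intro n
  induction n with
  | zero => intro m b x hg; simpa [HKanc] using hg
  | succ n ih =>
    intro m b x hg
    have hy := ih m b x hg
    have hm : m - (n:ℤ) = (m - (n:ℤ) - 1) + 1 := by ring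
    have hy' : HKGood ρ c δ A par ((m - (n:ℤ) - 1) + 1) (HKanc par n m b) x := by
      rw [← hm]; exact hy
    have hcast : m - ((n+1 : ℕ) : ℤ) = m - (n:ℤ) - 1 := by push_cast; ring
    rw [HKanc_succ, hcast]
    exact HKgood_par hρ_symm hρ_tri hκ hδ0 h1 hpar hy'

include hρ_symm hρ_tri hκ hδ0 h1 hpar in
lemma HKgood_ancZ {m j : ℤ} (hjm : j ≤ m) {b x : X} (hg : HKGood ρ c δ A par m b x) :
    HKGood ρ c δ A par j (HKancZ par m j b) x := by
  have := HKgood_anc hρ_symm hρ_tri hκ hδ0 h1 hpar (m - j).toNat m b x hg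
  have hcast : m - (((m - j).toNat : ℕ) : ℤ) = j := by omega
  rw [hcast] at this
  exact this

include hρ_symm hρ_tri hκ hδ0 hMc h1 hA_cov hpar in
lemma HKexists_good (hCfin : ∀ (j : ℤ) (x : X) (R : ℝ), {a | a ∈ A j ∧ ρ x a < R}.Finite)
    (j : ℤ) (x : X) : ∃ a, HKGood ρ c δ A par j a x := by
  set T : ℕ → Set X := fun i => {a | a ∈ A j ∧ HKAdm ρ c δ j a x ∧
    ∃ cc ∈ A (j + (i:ℤ)), HKAdm ρ c δ (j+(i:ℤ)) cc x ∧ HKancZ par (j+(i:ℤ)) j cc = a} with hT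
  have hfin : (T 0).Finite := by
    refine (hCfin j x (c * δ ^ j)).subset ?_
    intro a ha
    exact ⟨ha.1, ha.2.1⟩
  have hadm_of_cov : ∀ (l : ℤ) (cc : X), ρ x cc < M * δ ^ l → HKAdm ρ c δ l cc x := by
    intro l cc h
    exact lt_of_lt_of_le h (mul_le_mul_of_nonneg_right hMc (zpow_pos hδ0 l).le)
  have hne : ∀ i, (T i).Nonempty := by
    intro i
    obtain ⟨cc, hccA, hcc⟩ := hA_cov (j+(i:ℤ)) x
    have hadm : HKAdm ρ c δ (j+(i:ℤ)) cc x := hadm_of_cov _ _ hcc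
    have hlift := HKancZ_lift hρ_symm hρ_tri hκ hδ0 h1 hpar
      (by omega : j ≤ j + (i:ℤ)) hccA hadm
    exact ⟨_, hlift.1, hlift.2, cc, hccA, hadm, rfl⟩
  have hdec : ∀ i, T (i+1) ⊆ T i := by
    intro i a ha
    obtain ⟨haA, haadm, cc, hccA, hccadm, hanc⟩ := ha
    have hcast : j + ((i+1:ℕ):ℤ) = (j + (i:ℤ)) + 1 := by push_cast; ring
    rw [hcast] at hccA hccadm hanc
    refine ⟨haA, haadm, par (j+(i:ℤ)) cc, (hpar _ cc hccA).1,
      HKadm_step hρ_symm hρ_tri hκ hδ0 h1 hpar hccA hccadm, ?_⟩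
    rw [← hanc]
    have htop := HKancZ_top par (by omega : j + 1 ≤ (j + (i:ℤ)) + 1) cc
    rw [htop]
    have : (j + (i:ℤ)) + 1 - 1 = j + (i:ℤ) := by ring
    rw [this]
  obtain ⟨a, ha⟩ := HKstab T hdec hne hfin
  rw [Set.mem_iInter] at ha
  refine ⟨a, (ha 0).2.1, ?_⟩
  intro m hm
  have hi := ha (m - j).toNat
  obtain ⟨_, _, cc, hccA, hccadm, hanc⟩ := hi
  have hcast : j + (((m - j).toNat : ℕ) : ℤ) = m := by omega
  rw [hcast] at hccA hccadm hanc
  exact ⟨cc, hccA, hccadm, hanc⟩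

include hρ_symm hρ_tri hκ hδ0 hMc h1 hA_cov hpar in
lemma HKgood_succ (hCfin : ∀ (j : ℤ) (x : X) (R : ℝ), {a | a ∈ A j ∧ ρ x a < R}.Finite)
    {j : ℤ} {a : X} {x : X} (hg : HKGood ρ c δ A par j a x) :
    ∃ b, HKGood ρ c δ A par (j+1) b x ∧ par j b = a := by
  set T : ℕ → Set X := fun i => {b | b ∈ A (j+1) ∧ HKAdm ρ c δ (j+1) b x ∧ par j b = a ∧
    ∃ cc ∈ A (j + 1 + (i:ℤ)), HKAdm ρ c δ (j+1+(i:ℤ)) cc x ∧ HKancZ par (j+1+(i:ℤ)) (j+1) cc = b}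
    with hT
  have hfin : (T 0).Finite := by
    refine (hCfin (j+1) x (c * δ ^ (j+1))).subset ?_
    intro b hb
    exact ⟨hb.1, hb.2.1⟩
  have hne : ∀ i, (T i).Nonempty := by
    intro i
    obtain ⟨cc, hccA, hccadm, hanc⟩ := hg.2 (j + 1 + (i:ℤ)) (by omega)
    have hsub : j + 1 ≤ j + 1 + (i:ℤ) := by omega
    have hlift := HKancZ_lift hρ_symm hρ_tri hκ hδ0 h1 hpar hsub hccA hccadm
    refine ⟨HKancZ par (j+1+(i:ℤ)) (j+1) cc, hlift.1, hlift.2, ?_, cc, hccA, hccadm, rfl⟩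
    rw [← hanc, HKancZ_bot par hsub]
  have hdec : ∀ i, T (i+1) ⊆ T i := by
    intro i b hb
    obtain ⟨hbA, hbadm, hpb, cc, hccA, hccadm, hanc⟩ := hb
    have hcast : j + 1 + ((i+1:ℕ):ℤ) = (j + 1 + (i:ℤ)) + 1 := by push_cast; ring
    rw [hcast] at hccA hccadm hanc
    refine ⟨hbA, hbadm, hpb, par (j+1+(i:ℤ)) cc, (hpar _ cc hccA).1,
      HKadm_step hρ_symm hρ_tri hκ hδ0 h1 hpar hccA hccadm, ?_⟩
    rw [← hanc]
    have htop := HKancZ_top par (by omega : (j+1) + 1 ≤ (j + 1 + (i:ℤ)) + 1) cc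
    rw [htop]
    have : (j + 1 + (i:ℤ)) + 1 - 1 = j + 1 + (i:ℤ) := by ring
    rw [this]
  obtain ⟨b, hb⟩ := HKstab T hdec hne hfin
  rw [Set.mem_iInter] at hb
  refine ⟨b, ⟨(hb 0).2.1, ?_⟩, (hb 0).2.2.1⟩
  intro m hm
  have hi := hb (m - (j+1)).toNat
  obtain ⟨_, _, _, cc, hccA, hccadm, hanc⟩ := hi
  have hcast : j + 1 + (((m - (j+1)).toNat : ℕ) : ℤ) = m := by omega
  rw [hcast] at hccA hccadm hanc
  exact ⟨cc, hccA, hccadm, hanc⟩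

include hρ_symm hρ_tri hκ hδ0 hA_sep hpar in
lemma HKgood_unique (h2 : κ * (1 + c * δ) ≤ M / (2*κ)) {k : ℤ} {a x : X} (ha : a ∈ A k)
    (hax : ρ a x < δ ^ k) {a' : X} (hg : HKGood ρ c δ A par k a' x) : a' = a := by
  have hκ0 : (0:ℝ) < κ := lt_of_lt_of_le one_pos hκ
  have hδk : (0:ℝ) < δ ^ k := zpow_pos hδ0 k
  obtain ⟨b, hbA, hbadm, hanc⟩ := hg.2 (k+1) (by omega)
  have hanc' : par k b = a' := by
    rw [HKancZ_bot par (le_refl (k+1)), HKancZ_self] at hanc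
    exact hanc
  have hab : ρ a b < M * δ ^ k / (2*κ) := by
    have e3 : ρ a b ≤ κ * (ρ a x + ρ x b) := hρ_tri a b x
    have e1 : ρ x b < c * δ * δ ^ k := by
      have hz : (δ:ℝ) ^ (k+1) = δ ^ k * δ := zpow_add_one₀ (ne_of_gt hδ0) k
      have := hbadm
      rw [HKAdm, hz] at this
      linarith [this]
    have key : κ * (1 + c * δ) * δ ^ k ≤ M / (2*κ) * δ ^ k :=
      mul_le_mul_of_nonneg_right h2 hδk.le
    have : M / (2*κ) * δ ^ k = M * δ ^ k / (2*κ) := by ring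
    nlinarith [mul_lt_mul_of_pos_left e1 hκ0, mul_lt_mul_of_pos_left hax hκ0]
  have := (hpar k b hbA).2.2 a ha hab
  rw [← hanc', this]

end GoodLemmas

def HKsig (ρ : X → X → ℝ) (c δ : ℝ) (A : ℤ → Set X) (par : ℤ → X → X) (e : ℤ → ℕ → X) :
    ℕ → X → X
  | 0, x => if h : ∃ n : ℕ, HKGood ρ c δ A par 0 (e 0 n) x then e 0 (Nat.find h) else x
  | (k+1), x =>
      if h : ∃ n : ℕ, HKGood ρ c δ A par ((k:ℤ)+1) (e ((k:ℤ)+1) n) x ∧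
          par k (e ((k:ℤ)+1) n) = HKsig ρ c δ A par e k x
      then e ((k:ℤ)+1) (Nat.find h) else x

def HKs (ρ : X → X → ℝ) (c δ : ℝ) (A : ℤ → Set X) (par : ℤ → X → X) (e : ℤ → ℕ → X)
    (k : ℤ) (x : X) : X :=
  if 0 ≤ k then HKsig ρ c δ A par e k.toNat x else HKancZ par 0 k (HKsig ρ c δ A par e 0 x)

section SigLemmas

variable {ρ : X → X → ℝ} {κ δ M c : ℝ} {A : ℤ → Set X} {par : ℤ → X → X} {e : ℤ → ℕ → X}
variable (hρ_symm : ∀ x y, ρ x y = ρ y x)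
variable (hρ_tri : ∀ x y z, ρ x y ≤ κ * (ρ x z + ρ z y))
variable (hκ : 1 ≤ κ) (hδ0 : 0 < δ) (hMc : M ≤ c) (h1 : κ * (c * δ + M) ≤ c)
variable (hA_cov : ∀ (j : ℤ) (x : X), ∃ a ∈ A j, ρ x a < M * δ ^ j)
variable (hpar : ∀ j : ℤ, ∀ b ∈ A (j+1), par j b ∈ A j ∧ ρ (par j b) b < M * δ ^ j ∧
    ∀ a ∈ A j, ρ a b < M * δ ^ j / (2*κ) → a = par j b)
variable (hCfin : ∀ (j : ℤ) (x : X) (R : ℝ), {a | a ∈ A j ∧ ρ x a < R}.Finite)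
variable (hAe : ∀ j : ℤ, A j = Set.range (e j))

include hρ_symm hρ_tri hκ hδ0 hMc h1 hA_cov hpar hCfin hAe in
lemma HKsig_good : ∀ (n : ℕ) (x : X),
    HKGood ρ c δ A par (n:ℤ) (HKsig ρ c δ A par e n x) x := by
  intro n
  induction n with
  | zero =>
    intro x
    have hex : ∃ m : ℕ, HKGood ρ c δ A par 0 (e 0 m) x := by
      obtain ⟨a, ha⟩ := HKexists_good hρ_symm hρ_tri hκ hδ0 hMc h1 hA_cov hpar hCfin 0 x
      have haA : a ∈ A 0 := (HKgood_mem ha).1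
      rw [hAe 0] at haA
      obtain ⟨m, hm⟩ := haA
      exact ⟨m, by rw [hm]; exact ha⟩
    simp only [HKsig, Nat.cast_zero]
    rw [dif_pos hex]
    exact Nat.find_spec hex
  | succ n ih =>
    intro x
    obtain ⟨b, hbg, hbp⟩ := HKgood_succ hρ_symm hρ_tri hκ hδ0 hMc h1 hA_cov hpar hCfin (ih x)
    have hbA : b ∈ A ((n:ℤ)+1) := (HKgood_mem hbg).1
    rw [hAe] at hbA
    obtain ⟨m, hm⟩ := hbA
    have hex : ∃ m : ℕ, HKGood ρ c δ A par ((n:ℤ)+1) (e ((n:ℤ)+1) m) x ∧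
        par n (e ((n:ℤ)+1) m) = HKsig ρ c δ A par e n x :=
      ⟨m, by rw [hm]; exact ⟨hbg, hbp⟩⟩
    simp only [HKsig]
    rw [dif_pos hex]
    have := (Nat.find_spec hex).1
    have hcast : ((n+1 : ℕ) : ℤ) = (n:ℤ) + 1 := by push_cast; ring
    rw [hcast]
    exact this

include hρ_symm hρ_tri hκ hδ0 hMc h1 hA_cov hpar hCfin hAe in
lemma HKsig_par (n : ℕ) (x : X) :
    par n (HKsig ρ c δ A par e (n+1) x) = HKsig ρ c δ A par e n x := by
  obtain ⟨b, hbg, hbp⟩ := HKgood_succ hρ_symm hρ_tri hκ hδ0 hMc h1 hA_cov hpar hCfin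
    (HKsig_good hρ_symm hρ_tri hκ hδ0 hMc h1 hA_cov hpar hCfin hAe n x)
  have hbA : b ∈ A ((n:ℤ)+1) := (HKgood_mem hbg).1
  rw [hAe] at hbA
  obtain ⟨m, hm⟩ := hbA
  have hex : ∃ m : ℕ, HKGood ρ c δ A par ((n:ℤ)+1) (e ((n:ℤ)+1) m) x ∧
      par n (e ((n:ℤ)+1) m) = HKsig ρ c δ A par e n x :=
    ⟨m, by rw [hm]; exact ⟨hbg, hbp⟩⟩
  simp only [HKsig]
  rw [dif_pos hex]
  exact (Nat.find_spec hex).2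

include hρ_symm in
lemma HKgood_meas [MeasurableSpace X] (hball : ∀ (x : X) (r : ℝ), MeasurableSet {y | ρ x y < r})
    (hAc : ∀ j : ℤ, (A j).Countable) (j : ℤ) (a : X) :
    MeasurableSet {x | HKGood ρ c δ A par j a x} := by
  have hball' : ∀ (b : X) (r : ℝ), MeasurableSet {x | ρ x b < r} := by
    intro b r
    have : {x | ρ x b < r} = {y | ρ b y < r} := by
      ext y; simp only [mem_setOf_eq]; rw [hρ_symm y b]
    rw [this]; exact hball b r
  have hset : {x | HKGood ρ c δ A par j a x} =
      {x | ρ x a < c * δ ^ j} ∩ ⋂ (m : ℤ), ⋂ (_ : j ≤ m),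
        ⋃ b ∈ {b | b ∈ A m ∧ HKancZ par m j b = a}, {x | ρ x b < c * δ ^ m} := by
    ext x
    simp only [HKGood, HKExt, HKAdm, mem_inter_iff, mem_setOf_eq, mem_iInter, mem_iUnion,
      exists_prop]
    constructor
    · rintro ⟨ha1, ha2⟩
      refine ⟨ha1, fun m hm => ?_⟩
      obtain ⟨b, hbA, hadm, hanc⟩ := ha2 m hm
      exact ⟨b, ⟨hbA, hanc⟩, hadm⟩
    · rintro ⟨ha1, ha2⟩
      refine ⟨ha1, fun m hm => ?_⟩
      obtain ⟨b, ⟨hbA, hanc⟩, hadm⟩ := ha2 m hm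
      exact ⟨b, hbA, hadm, hanc⟩
  rw [hset]
  refine (hball' a _).inter (MeasurableSet.iInter fun m => MeasurableSet.iInter fun _ => ?_)
  exact MeasurableSet.biUnion ((hAc m).mono (fun b hb => hb.1)) fun b _ => hball' b _

include hρ_symm hρ_tri hκ hδ0 hMc h1 hA_cov hpar hCfin hAe in
lemma HKsig_meas [MeasurableSpace X] (hball : ∀ (x : X) (r : ℝ), MeasurableSet {y | ρ x y < r})
    (hAc : ∀ j : ℤ, (A j).Countable) :
    ∀ (n : ℕ) (b : X), MeasurableSet {x | HKsig ρ c δ A par e n x = b} := by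
  intro n
  induction n with
  | zero =>
    intro b
    have hall : ∀ x : X, ∃ m : ℕ, HKGood ρ c δ A par 0 (e 0 m) x := by
      intro x
      obtain ⟨a, ha⟩ := HKexists_good hρ_symm hρ_tri hκ hδ0 hMc h1 hA_cov hpar hCfin 0 x
      have haA : a ∈ A 0 := (HKgood_mem ha).1
      rw [hAe 0] at haA
      obtain ⟨m, hm⟩ := haA
      exact ⟨m, by rw [hm]; exact ha⟩
    have heq : {x | HKsig ρ c δ A par e 0 x = b} =
        ⋃ (m : ℕ), ⋃ (_ : e 0 m = b),
          ({x | HKGood ρ c δ A par 0 (e 0 m) x} ∩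
            ⋂ (i : ℕ), ⋂ (_ : i < m), {x | HKGood ρ c δ A par 0 (e 0 i) x}ᶜ) := by
      ext x
      simp only [mem_setOf_eq, mem_iUnion, mem_iInter, mem_inter_iff, mem_compl_iff,
        exists_prop]
      constructor
      · intro hx
        refine ⟨Nat.find (hall x), ?_, Nat.find_spec (hall x),
          fun i hi => Nat.find_min (hall x) hi⟩
        rw [← hx]
        simp only [HKsig]
        rw [dif_pos (hall x)]
      · rintro ⟨m, hm, hgood, hmin⟩
        have hfind : Nat.find (hall x) = m := by
          refine le_antisymm (Nat.find_min' (hall x) hgood) ?_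
          by_contra hlt
          push_neg at hlt
          exact hmin _ hlt (Nat.find_spec (hall x))
        simp only [HKsig]
        rw [dif_pos (hall x), hfind, hm]
    rw [heq]
    refine MeasurableSet.iUnion fun m => MeasurableSet.iUnion fun _ => ?_
    refine (HKgood_meas hρ_symm hball hAc 0 (e 0 m)).inter ?_
    exact MeasurableSet.iInter fun i => MeasurableSet.iInter fun _ =>
      (HKgood_meas hρ_symm hball hAc 0 (e 0 i)).compl
  | succ n ih =>
    intro b
    have hall : ∀ x : X, ∃ m : ℕ, HKGood ρ c δ A par ((n:ℤ)+1) (e ((n:ℤ)+1) m) x ∧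
        par n (e ((n:ℤ)+1) m) = HKsig ρ c δ A par e n x := by
      intro x
      obtain ⟨b', hbg, hbp⟩ := HKgood_succ hρ_symm hρ_tri hκ hδ0 hMc h1 hA_cov hpar hCfin
        (HKsig_good hρ_symm hρ_tri hκ hδ0 hMc h1 hA_cov hpar hCfin hAe n x)
      have hbA : b' ∈ A ((n:ℤ)+1) := (HKgood_mem hbg).1
      rw [hAe] at hbA
      obtain ⟨m, hm⟩ := hbA
      exact ⟨m, by rw [hm]; exact ⟨hbg, hbp⟩⟩
    have heq : {x | HKsig ρ c δ A par e (n+1) x = b} =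
        ⋃ (m : ℕ), ⋃ (_ : e ((n:ℤ)+1) m = b),
          (({x | HKGood ρ c δ A par ((n:ℤ)+1) (e ((n:ℤ)+1) m) x} ∩
              {x | HKsig ρ c δ A par e n x = par n (e ((n:ℤ)+1) m)}) ∩
            ⋂ (i : ℕ), ⋂ (_ : i < m),
              ({x | HKGood ρ c δ A par ((n:ℤ)+1) (e ((n:ℤ)+1) i) x} ∩
                {x | HKsig ρ c δ A par e n x = par n (e ((n:ℤ)+1) i)})ᶜ) := by
      ext x
      simp only [mem_setOf_eq, mem_iUnion, mem_iInter, mem_inter_iff, mem_compl_iff,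
        exists_prop, not_and]
      constructor
      · intro hx
        refine ⟨Nat.find (hall x), ?_, ⟨(Nat.find_spec (hall x)).1,
            ((Nat.find_spec (hall x)).2).symm⟩, fun i hi hgood hseq => ?_⟩
        · rw [← hx]
          simp only [HKsig]
          rw [dif_pos (hall x)]
        · exact Nat.find_min (hall x) hi ⟨hgood, hseq.symm⟩
      · rintro ⟨m, hm, ⟨hgood, hseq⟩, hmin⟩
        have hfind : Nat.find (hall x) = m := by
          refine le_antisymm (Nat.find_min' (hall x) ⟨hgood, hseq.symm⟩) ?_
          by_contra hlt
          push_neg at hlt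
          exact hmin _ hlt (Nat.find_spec (hall x)).1 ((Nat.find_spec (hall x)).2).symm
        simp only [HKsig]
        rw [dif_pos (hall x), hfind, hm]
    rw [heq]
    refine MeasurableSet.iUnion fun m => MeasurableSet.iUnion fun _ => ?_
    refine (((HKgood_meas hρ_symm hball hAc _ _).inter (ih _)).inter ?_)
    exact MeasurableSet.iInter fun i => MeasurableSet.iInter fun _ =>
      ((HKgood_meas hρ_symm hball hAc _ _).inter (ih _)).compl

include hρ_symm hρ_tri hκ hδ0 hMc h1 hA_cov hpar hCfin hAe in
lemma HKs_good (k : ℤ) (x : X) : HKGood ρ c δ A par k (HKs ρ c δ A par e k x) x := by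
  unfold HKs
  split_ifs with h
  · have := HKsig_good hρ_symm hρ_tri hκ hδ0 hMc h1 hA_cov hpar hCfin hAe k.toNat x
    rwa [Int.toNat_of_nonneg h] at this
  · have h0 := HKsig_good hρ_symm hρ_tri hκ hδ0 hMc h1 hA_cov hpar hCfin hAe 0 x
    rw [Nat.cast_zero] at h0
    exact HKgood_ancZ hρ_symm hρ_tri hκ hδ0 h1 hpar (by omega : k ≤ 0) h0

include hρ_symm hρ_tri hκ hδ0 hMc h1 hA_cov hpar hCfin hAe in
lemma HKs_par (k : ℤ) (x : X) :
    par k (HKs ρ c δ A par e (k+1) x) = HKs ρ c δ A par e k x := by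
  unfold HKs
  by_cases h0 : 0 ≤ k
  · rw [if_pos (by omega : (0:ℤ) ≤ k + 1), if_pos h0]
    have ht : (k+1).toNat = k.toNat + 1 := by omega
    rw [ht]
    have := HKsig_par hρ_symm hρ_tri hκ hδ0 hMc h1 hA_cov hpar hCfin hAe k.toNat x
    rwa [Int.toNat_of_nonneg h0] at this
  · by_cases h1' : 0 ≤ k + 1
    · have hk : k = -1 := by omega
      subst hk
      rw [if_pos h1', if_neg (by omega : ¬ (0:ℤ) ≤ -1)]
      have ht : ((-1:ℤ) + 1).toNat = 0 := by omega
      rw [ht]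
      rw [HKancZ_bot par (by omega : (-1:ℤ)+1 ≤ 0)]
      norm_num [HKancZ_self]
    · rw [if_neg h1', if_neg h0]
      rw [HKancZ_bot par (by omega : k+1 ≤ 0)]

include hρ_symm hρ_tri hκ hδ0 hMc h1 hA_cov hpar hCfin hAe in
lemma HKs_anc : ∀ (n : ℕ) (j : ℤ) (x : X),
    HKs ρ c δ A par e j x = HKancZ par (j + (n:ℤ)) j (HKs ρ c δ A par e (j + (n:ℤ)) x) := by
  intro n
  induction n with
  | zero =>
    intro j x
    simp only [Nat.cast_zero, add_zero, HKancZ_self]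
  | succ n ih =>
    intro j x
    have hcast : j + ((n+1:ℕ):ℤ) = (j+1) + (n:ℤ) := by push_cast; ring
    rw [hcast]
    rw [HKancZ_bot par (by omega : j + 1 ≤ (j+1)+(n:ℤ))]
    rw [← ih (j+1) x]
    exact (HKs_par hρ_symm hρ_tri hκ hδ0 hMc h1 hA_cov hpar hCfin hAe j x).symm

include hρ_symm hρ_tri hκ hδ0 hMc h1 hA_cov hpar hCfin hAe in
lemma HKs_ancZ {j m : ℤ} (h : j ≤ m) (x : X) :
    HKs ρ c δ A par e j x = HKancZ par m j (HKs ρ c δ A par e m x) := by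
  have := HKs_anc hρ_symm hρ_tri hκ hδ0 hMc h1 hA_cov hpar hCfin hAe (m - j).toNat j x
  rwa [show j + (((m-j).toNat : ℕ) : ℤ) = m by omega] at this

include hρ_symm hρ_tri hκ hδ0 hMc h1 hA_cov hpar hCfin hAe in
lemma HKs_meas [MeasurableSpace X] (hball : ∀ (x : X) (r : ℝ), MeasurableSet {y | ρ x y < r})
    (hAc : ∀ j : ℤ, (A j).Countable) (k : ℤ) (b : X) :
    MeasurableSet {x | HKs ρ c δ A par e k x = b} := by
  unfold HKs
  by_cases h : 0 ≤ k
  · simp only [if_pos h]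
    exact HKsig_meas hρ_symm hρ_tri hκ hδ0 hMc h1 hA_cov hpar hCfin hAe hball hAc k.toNat b
  · simp only [if_neg h]
    have heq : {x | HKancZ par 0 k (HKsig ρ c δ A par e 0 x) = b} =
        ⋃ a ∈ {a | a ∈ A 0 ∧ HKancZ par 0 k a = b}, {x | HKsig ρ c δ A par e 0 x = a} := by
      ext x
      simp only [mem_setOf_eq, mem_iUnion, exists_prop]
      constructor
      · intro hx
        refine ⟨HKsig ρ c δ A par e 0 x, ⟨?_, hx⟩, rfl⟩
        have h0 := HKsig_good hρ_symm hρ_tri hκ hδ0 hMc h1 hA_cov hpar hCfin hAe 0 x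
        rw [Nat.cast_zero] at h0
        exact (HKgood_mem h0).1
      · rintro ⟨a, ⟨_, hanc⟩, hsig⟩
        rw [hsig, hanc]
    rw [heq]
    exact MeasurableSet.biUnion ((hAc 0).mono (fun a ha => ha.1))
      (fun a _ => HKsig_meas hρ_symm hρ_tri hκ hδ0 hMc h1 hA_cov hpar hCfin hAe hball hAc 0 a)

end SigLemmas

section MeasureLemmas

variable [MeasurableSpace X] {ρ : X → X → ℝ} {μ : Measure X} {κ D : ℝ}
variable (hκ : 1 ≤ κ) (hD : 0 < D)
variable (hρ_nonneg : ∀ x y, 0 ≤ ρ x y)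
variable (hρ_symm : ∀ x y, ρ x y = ρ y x)
variable (hρ_tri : ∀ x y z, ρ x y ≤ κ * (ρ x z + ρ z y))
variable (hball_meas : ∀ (x : X) (r : ℝ), MeasurableSet {y | ρ x y < r})
variable (hdoubling : ∀ (x : X) (r : ℝ), 0 < r →
      0 < μ {y | ρ x y < 2 * r} ∧
      μ {y | ρ x y < 2 * r} ≤ ENNReal.ofReal D * μ {y | ρ x y < r} ∧
      μ {y | ρ x y < 2 * r} < ⊤)

include hdoubling in
lemma HKball_pos (x : X) (r : ℝ) (hr : 0 < r) : 0 < μ {y | ρ x y < r} := by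
  have := (hdoubling x (r/2) (by linarith)).1
  rwa [show 2 * (r/2) = r by ring] at this

include hdoubling in
lemma HKball_fin (x : X) (r : ℝ) (hr : 0 < r) : μ {y | ρ x y < r} < ⊤ := by
  have := (hdoubling x (r/2) (by linarith)).2.2
  rwa [show 2 * (r/2) = r by ring] at this

include hdoubling in
lemma HKdoub_iter : ∀ (N : ℕ) (x : X) (r : ℝ), 0 < r →
    μ {y | ρ x y < 2^N * r} ≤ (ENNReal.ofReal D)^N * μ {y | ρ x y < r} := by
  intro N
  induction N with
  | zero => intro x r hr; simp
  | succ N ih =>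
    intro x r hr
    have h2 : (2:ℝ)^(N+1) * r = 2 * (2^N * r) := by ring
    rw [h2]
    calc μ {y | ρ x y < 2 * (2^N * r)}
        ≤ ENNReal.ofReal D * μ {y | ρ x y < 2^N * r} :=
          (hdoubling x (2^N*r) (by positivity)).2.1
      _ ≤ ENNReal.ofReal D * ((ENNReal.ofReal D)^N * μ {y | ρ x y < r}) :=
          mul_le_mul_right (ih x r hr) _
      _ = (ENNReal.ofReal D)^(N+1) * μ {y | ρ x y < r} := by ring

include hρ_nonneg hdoubling in
lemma HKD_ge_one [Nonempty X] : 1 ≤ D := by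
  by_contra hD1
  push_neg at hD1
  have x : X := Classical.arbitrary X
  have h1 := HKball_pos hdoubling x 1 one_pos
  have h2 := (hdoubling x 1 one_pos).2.1
  have h3 := (hdoubling x 1 one_pos).2.2
  have hmono : μ {y | ρ x y < 1} ≤ μ {y | ρ x y < 2 * 1} :=
    measure_mono (fun y hy => by simp only [mem_setOf_eq] at *; linarith)
  have hfin : μ {y | ρ x y < 1} < ⊤ := lt_of_le_of_lt hmono h3
  have hofD : ENNReal.ofReal D < 1 := by
    rw [ENNReal.ofReal_lt_one]; exact hD1
  have hlt : ENNReal.ofReal D * μ {y | ρ x y < 1} < 1 * μ {y | ρ x y < 1} :=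
    ENNReal.mul_lt_mul_left h1.ne' hfin.ne hofD
  rw [one_mul] at hlt
  exact lt_irrefl _ (lt_of_le_of_lt h2 (lt_of_lt_of_le hlt hmono))

include hκ hD hρ_nonneg hρ_symm hρ_tri hball_meas hdoubling in
lemma HKsep_finite (hD1 : 1 ≤ D) (r R : ℝ) (hr : 0 < r) (x : X) (s : Set X)
    (hsep : ∀ a ∈ s, ∀ b ∈ s, a ≠ b → r ≤ ρ a b) (hbdd : ∀ a ∈ s, ρ x a < R) :
    s.Finite := by
  by_contra hinf
  have hinf : s.Infinite := hinf
  obtain ⟨a₀, ha₀⟩ := hinf.nonempty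
  have hκ0 : (0:ℝ) < κ := lt_of_lt_of_le one_pos hκ
  have hR0 : 0 < R := lt_of_le_of_lt (hρ_nonneg x a₀) (hbdd a₀ ha₀)
  set r2 := r / (2*κ) with hr2def
  have hr2 : 0 < r2 := by positivity
  set R1 := κ * (R + r2) with hR1def
  have hR1 : 0 < R1 := by positivity
  set R2 := κ * (R + R1) with hR2def
  have hR2pos : 0 < R2 := by positivity
  obtain ⟨N, hN⟩ : ∃ N : ℕ, R2 / r2 < 2^N := pow_unbounded_of_one_lt _ one_lt_two
  have hNr : R2 ≤ 2^N * r2 := by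
    rw [div_lt_iff₀ hr2] at hN; linarith
  set K := (ENNReal.ofReal D)^N with hK
  have hK0 : K ≠ 0 := by
    apply pow_ne_zero
    simp only [ne_eq, ENNReal.ofReal_eq_zero, not_le]
    linarith
  have hKtop : K ≠ ⊤ := by
    exact ENNReal.pow_ne_top ENNReal.ofReal_ne_top
  set V := μ {y | ρ x y < R1} with hV
  have hV0 : 0 < V := HKball_pos hdoubling x R1 hR1
  have hVtop : V < ⊤ := HKball_fin hdoubling x R1 hR1
  have hsub1 : ∀ a ∈ s, {y | ρ a y < r2} ⊆ {y | ρ x y < R1} := by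
    intro a ha y hy
    simp only [mem_setOf_eq] at *
    calc ρ x y ≤ κ * (ρ x a + ρ a y) := hρ_tri x y a
      _ < κ * (R + r2) := mul_lt_mul_of_pos_left (add_lt_add (hbdd a ha) hy) hκ0
  have hsub2 : ∀ a ∈ s, {y | ρ x y < R1} ⊆ {y | ρ a y < R2} := by
    intro a ha y hy
    simp only [mem_setOf_eq] at *
    calc ρ a y ≤ κ * (ρ a x + ρ x y) := hρ_tri a y x
      _ < κ * (R + R1) := by
          rw [hρ_symm a x]
          exact mul_lt_mul_of_pos_left (add_lt_add (hbdd a ha) hy) hκ0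
  have hlow : ∀ a ∈ s, V / K ≤ μ {y | ρ a y < r2} := by
    intro a ha
    refine ENNReal.div_le_of_le_mul ?_
    rw [mul_comm]
    calc V ≤ μ {y | ρ a y < R2} := measure_mono (hsub2 a ha)
      _ ≤ μ {y | ρ a y < 2^N * r2} :=
          measure_mono (fun y hy => lt_of_lt_of_le hy hNr)
      _ ≤ K * μ {y | ρ a y < r2} := HKdoub_iter hdoubling N a r2 hr2
  set w := V / K with hw
  have hw0 : w ≠ 0 := (ENNReal.div_pos hV0.ne' hKtop).ne'
  have hwtop : w ≠ ⊤ := (ENNReal.div_lt_top hVtop.ne hK0).ne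
  obtain ⟨n, hn⟩ := ENNReal.exists_nat_gt ((ENNReal.div_lt_top hVtop.ne hw0).ne)
  have hVn : V < n * w := by
    rwa [ENNReal.div_lt_iff (Or.inl hw0) (Or.inl hwtop)] at hn
  obtain ⟨F, hFs, hFcard⟩ := hinf.exists_subset_card_eq n
  have hdisj : (↑F : Set X).PairwiseDisjoint (fun a => {y | ρ a y < r2}) := by
    intro a ha b hb hab
    refine Set.disjoint_left.mpr (fun y hya hyb => ?_)
    simp only [mem_setOf_eq] at hya hyb
    have h1 := hsep a (hFs ha) b (hFs hb) hab
    have h2 : ρ a b ≤ κ * (ρ a y + ρ y b) := hρ_tri a b y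
    rw [hρ_symm y b] at h2
    have h3 : κ * (ρ a y + ρ b y) < κ * (r2 + r2) :=
      mul_lt_mul_of_pos_left (add_lt_add hya hyb) hκ0
    have h4 : κ * (r2 + r2) = r := by
      rw [hr2def]; field_simp; ring
    linarith
  have hsum : ∑ a ∈ F, μ {y | ρ a y < r2} = μ (⋃ a ∈ F, {y | ρ a y < r2}) :=
    (measure_biUnion_finset hdisj (fun a _ => hball_meas a r2)).symm
  have hle : (n : ℕ) • w ≤ V := by
    calc (n : ℕ) • w = ∑ _a ∈ F, w := by rw [Finset.sum_const, hFcard]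
      _ ≤ ∑ a ∈ F, μ {y | ρ a y < r2} := Finset.sum_le_sum (fun a ha => hlow a (hFs ha))
      _ = μ (⋃ a ∈ F, {y | ρ a y < r2}) := hsum
      _ ≤ V := by
          refine measure_mono ?_
          intro y hy
          simp only [mem_iUnion, exists_prop] at hy
          obtain ⟨a, ha, hya⟩ := hy
          exact hsub1 a (hFs ha) hya
  rw [nsmul_eq_mul] at hle
  exact absurd hVn (not_lt.mpr hle)

end MeasureLemmas
end HKDev

/-- A dyadic grid (in the sense of Hytönen–Kairema) with constants `c`, `δ`, `ε`, on a
quasimetric measure space `(X, ρ, μ)`, given by generations `𝒟 k` and centers `center Q`. -/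
def IsDyadicGrid {X : Type*} [MeasurableSpace X] (ρ : X → X → ℝ)
    (μ : Measure X) (c δ ε : ℝ)
    (𝒟 : ℤ → Set (Set X)) (center : Set X → X) : Prop :=
  (∀ k : ℤ, ∀ Q ∈ 𝒟 k, MeasurableSet Q) ∧
  -- (1) each generation covers X
  (∀ k : ℤ, ⋃₀ 𝒟 k = univ) ∧
  -- (2) any two cubes with nonempty intersection are nested
  (∀ k₁ k₂ : ℤ, ∀ Q₁ ∈ 𝒟 k₁, ∀ Q₂ ∈ 𝒟 k₂, (Q₁ ∩ Q₂).Nonempty → Q₁ ⊆ Q₂ ∨ Q₂ ⊆ Q₁) ∧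
  -- (3) every cube has at least one child
  (∀ k : ℤ, ∀ Q ∈ 𝒟 k, ∃ Q' ∈ 𝒟 (k + 1), Q' ⊆ Q) ∧
  -- (4) every cube has exactly one parent
  (∀ k : ℤ, ∀ Q ∈ 𝒟 k, ∃! Q', Q' ∈ 𝒟 (k - 1) ∧ Q ⊆ Q') ∧
  -- (5) children have comparable measure
  (∀ k : ℤ, ∀ Q₁ ∈ 𝒟 k, ∀ Q₂ ∈ 𝒟 (k + 1), Q₂ ⊆ Q₁ → ENNReal.ofReal ε * μ Q₁ ≤ μ Q₂) ∧
  -- (6) the sandwich property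
  (∀ k : ℤ, ∀ Q ∈ 𝒟 k,
    {y | ρ (center Q) y < δ ^ k} ⊆ Q ∧ Q ⊆ {y | ρ (center Q) y < c * δ ^ k})

/-- **Hytönen–Kairema dyadic decomposition.** On any space of homogeneous type `(X, ρ, μ)`
with quasimetric constant `κ` and doubling constant `D`, there exist constants `c > 1`,
`0 < δ < 1/100`, `0 < ε < 1`, a family of dyadic cubes `𝒟 = ⋃_{k∈ℤ} 𝒟 k`, and centers,
forming a dyadic grid. -/
theorem hytonen_kairema_dyadic_decomposition
    {X : Type*} [MeasurableSpace X] [Nonempty X]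
    (ρ : X → X → ℝ) (μ : Measure X) (κ D : ℝ)
    (hκ : 1 ≤ κ) (hD : 0 < D)
    (hρ_nonneg : ∀ x y, 0 ≤ ρ x y)
    (hρ_eq : ∀ x y, ρ x y = 0 ↔ x = y)
    (hρ_symm : ∀ x y, ρ x y = ρ y x)
    (hρ_tri : ∀ x y z, ρ x y ≤ κ * (ρ x z + ρ z y))
    (hball_meas : ∀ x : X, ∀ r : ℝ, MeasurableSet {y | ρ x y < r})
    (hdoubling : ∀ x : X, ∀ r : ℝ, 0 < r →
      0 < μ {y | ρ x y < 2 * r} ∧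
      μ {y | ρ x y < 2 * r} ≤ ENNReal.ofReal D * μ {y | ρ x y < r} ∧
      μ {y | ρ x y < 2 * r} < ⊤) :
    ∃ (c δ ε : ℝ) (𝒟 : ℤ → Set (Set X)) (center : Set X → X),
      1 < c ∧ 0 < δ ∧ δ < 1 / 100 ∧ 0 < ε ∧ ε < 1 ∧
      IsDyadicGrid ρ μ c δ ε 𝒟 center := by

  classical
  have hκ0 : (0:ℝ) < κ := lt_of_lt_of_le one_pos hκ
  set M : ℝ := 4*κ^2 with hMdef
  set δ : ℝ := 1/(200*κ^3) with hδdef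
  set c : ℝ := 8*κ^3 with hcdef
  have hδ0 : 0 < δ := by rw [hδdef]; positivity
  have hc0 : 0 < c := by rw [hcdef]; positivity
  have hM0 : 0 < M := by rw [hMdef]; positivity
  have hcδ : c * δ = 1/25 := by rw [hcdef, hδdef]; field_simp; ring
  have hδ1 : δ < 1 := by
    rw [hδdef, div_lt_one (by positivity)]
    nlinarith
  have hδ100 : δ < 1/100 := by
    rw [hδdef]
    rw [div_lt_div_iff₀ (by positivity) (by norm_num)]
    nlinarith
  have hMc : M ≤ c := by rw [hMdef, hcdef]; nlinarith
  have h1 : κ * (c * δ + M) ≤ c := by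
    rw [hcδ, hMdef, hcdef]; nlinarith
  have h2 : κ * (1 + c * δ) ≤ M / (2*κ) := by
    have hM2 : M / (2*κ) = 2*κ := by rw [hMdef]; field_simp; ring
    rw [hcδ, hM2]; nlinarith
  have hD1 : 1 ≤ D := HKD_ge_one hρ_nonneg hdoubling
  -- nets
  have hnet := fun j : ℤ => HKnet_exists ρ hρ_eq hρ_symm (M*δ^j) (by positivity)
  choose A hA_sep hA_cov using hnet
  -- finiteness of bounded pieces of nets
  have hCfin : ∀ (j : ℤ) (x : X) (R : ℝ), {a | a ∈ A j ∧ ρ x a < R}.Finite := by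
    intro j x R
    refine HKsep_finite hκ hD hρ_nonneg hρ_symm hρ_tri hball_meas hdoubling hD1
      (M*δ^j) R (by positivity) x _ ?_ ?_
    · intro a ha b hb hab; exact hA_sep j a ha.1 b hb.1 hab
    · intro a ha; exact ha.2
  have hAc : ∀ j : ℤ, (A j).Countable := by
    intro j
    have x₀ : X := Classical.arbitrary X
    have hAeq : A j = ⋃ n : ℕ, {a | a ∈ A j ∧ ρ x₀ a < n+1} := by
      ext a
      simp only [mem_iUnion, mem_setOf_eq]
      constructor
      · intro ha
        obtain ⟨n, hn⟩ := exists_nat_gt (ρ x₀ a)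
        exact ⟨n, ha, by linarith⟩
      · rintro ⟨n, ha, _⟩; exact ha
    rw [hAeq]
    exact countable_iUnion (fun n => (hCfin j x₀ (n+1)).countable)
  have hAne : ∀ j : ℤ, (A j).Nonempty := by
    intro j
    obtain ⟨a, ha, _⟩ := hA_cov j (Classical.arbitrary X)
    exact ⟨a, ha⟩
  have he := fun j : ℤ => (hAc j).exists_eq_range (hAne j)
  choose e hAe using he
  -- parent maps
  have hparE : ∀ (j : ℤ) (b : X), ∃ a, b ∈ A (j+1) → (a ∈ A j ∧ ρ a b < M*δ^j ∧
      ∀ a' ∈ A j, ρ a' b < M*δ^j/(2*κ) → a' = a) := by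
    intro j b
    by_cases hb : b ∈ A (j+1)
    · by_cases hnear : ∃ a' ∈ A j, ρ a' b < M*δ^j/(2*κ)
      · obtain ⟨a, haA, ha⟩ := hnear
        refine ⟨a, fun _ => ⟨haA, ?_, ?_⟩⟩
        · have hpos : (0:ℝ) < M*δ^j := by positivity
          calc ρ a b < M*δ^j/(2*κ) := ha
            _ ≤ M*δ^j := by
              rw [div_le_iff₀ (by positivity)]
              nlinarith
        · intro a' ha'A ha'
          by_contra hne
          have hsep' := hA_sep j a' ha'A a haA hne
          have htri : ρ a' a ≤ κ * (ρ a' b + ρ b a) := hρ_tri a' a b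
          rw [hρ_symm b a] at htri
          have hlt : κ * (ρ a' b + ρ a b) < κ * (M*δ^j/(2*κ) + M*δ^j/(2*κ)) :=
            mul_lt_mul_of_pos_left (add_lt_add ha' ha) hκ0
          have heq2 : κ * (M*δ^j/(2*κ) + M*δ^j/(2*κ)) = M*δ^j := by
            field_simp; ring
          linarith
      · push_neg at hnear
        obtain ⟨a, haA, hab⟩ := hA_cov j b
        refine ⟨a, fun _ => ⟨haA, by rw [hρ_symm]; exact hab, ?_⟩⟩
        intro a' ha'A ha'
        exact absurd ha' (not_lt.mpr (hnear a' ha'A))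
    · exact ⟨b, fun h => absurd h hb⟩
  choose par hparAll using hparE
  have hpar : ∀ j : ℤ, ∀ b ∈ A (j+1), par j b ∈ A j ∧ ρ (par j b) b < M * δ ^ j ∧
      ∀ a ∈ A j, ρ a b < M * δ ^ j / (2*κ) → a = par j b := by
    intro j b hb
    exact hparAll j b hb
  -- basic facts about the selection function
  have Hgood : ∀ (k : ℤ) (x : X), HKGood ρ c δ A par k (HKs ρ c δ A par e k x) x :=
    fun k x => HKs_good hρ_symm hρ_tri hκ hδ0 hMc h1 hA_cov hpar hCfin hAe k x
  have Hmem : ∀ (k : ℤ) (x : X), HKs ρ c δ A par e k x ∈ A k :=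
    fun k x => (HKgood_mem (Hgood k x)).1
  have Hadm : ∀ (k : ℤ) (x : X), ρ x (HKs ρ c δ A par e k x) < c * δ ^ k :=
    fun k x => (Hgood k x).1
  have Hpar : ∀ (k : ℤ) (x : X), par k (HKs ρ c δ A par e (k+1) x) = HKs ρ c δ A par e k x :=
    fun k x => HKs_par hρ_symm hρ_tri hκ hδ0 hMc h1 hA_cov hpar hCfin hAe k x
  have HancZ : ∀ {j m : ℤ}, j ≤ m → ∀ x : X,
      HKs ρ c δ A par e j x = HKancZ par m j (HKs ρ c δ A par e m x) :=
    fun h x => HKs_ancZ hρ_symm hρ_tri hκ hδ0 hMc h1 hA_cov hpar hCfin hAe h x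
  have Huniq : ∀ {k : ℤ} {a x : X}, a ∈ A k → ρ a x < δ^k → HKs ρ c δ A par e k x = a :=
    fun ha hax => HKgood_unique hρ_symm hρ_tri hκ hδ0 hA_sep hpar h2 ha hax (Hgood _ _)
  have Hself : ∀ (k : ℤ) (a : X), a ∈ A k → HKs ρ c δ A par e k a = a := by
    intro k a ha
    refine Huniq ha ?_
    rw [(hρ_eq a a).mpr rfl]
    exact zpow_pos hδ0 k
  have Hinner : ∀ (k : ℤ) (a : X), a ∈ A k →
      {y | ρ a y < δ^k} ⊆ {x | HKs ρ c δ A par e k x = a} := by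
    intro k a ha y hy
    exact Huniq ha hy
  -- choose the doubling exponent for the measure comparison
  obtain ⟨N', hN'⟩ : ∃ N' : ℕ, 2*κ*c/δ < 2^N' := pow_unbounded_of_one_lt _ one_lt_two
  -- the grid and centers
  set 𝒟 : ℤ → Set (Set X) :=
    fun k => {Q | ∃ a ∈ A k, Q = {x | HKs ρ c δ A par e k x = a}} with h𝒟
  refine ⟨2*κ*c, δ, 1/(2*D^N'), 𝒟,
    fun Q => Classical.epsilon (fun z => z ∈ Q ∧ ∀ (j : ℤ) (b : X),
      b ∈ A j ∧ Q = {x | HKs ρ c δ A par e j x = b} → ∀ y : X, ρ z y < δ^j → y ∈ Q),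
    ?_, hδ0, hδ100, ?_, ?_, ?_, ?_, ?_, ?_, ?_, ?_, ?_⟩
  · rw [hcdef]; nlinarith
  · positivity
  · have hDN : (1:ℝ) ≤ D^N' := one_le_pow₀ hD1
    rw [div_lt_one (by positivity)]
    nlinarith
  · -- measurability
    intro k Q hQ
    obtain ⟨a, ha, rfl⟩ := hQ
    exact HKs_meas hρ_symm hρ_tri hκ hδ0 hMc h1 hA_cov hpar hCfin hAe hball_meas hAc k a
  · -- covering
    intro k
    ext x
    simp only [mem_sUnion, mem_univ, iff_true]
    exact ⟨{x' | HKs ρ c δ A par e k x' = HKs ρ c δ A par e k x},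
      ⟨HKs ρ c δ A par e k x, Hmem k x, rfl⟩, rfl⟩
  · -- nesting
    intro k₁ k₂ Q₁ hQ₁ Q₂ hQ₂ hne
    obtain ⟨a₁, ha₁, rfl⟩ := hQ₁
    obtain ⟨a₂, ha₂, rfl⟩ := hQ₂
    obtain ⟨x, hx₁, hx₂⟩ := hne
    simp only [mem_setOf_eq] at hx₁ hx₂
    rcases le_total k₁ k₂ with h | h
    · right
      have hanc : HKancZ par k₂ k₁ a₂ = a₁ := by
        rw [← hx₁, HancZ h x, hx₂]
      intro y hy
      simp only [mem_setOf_eq] at hy ⊢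
      rw [HancZ h y, hy, hanc]
    · left
      have hanc : HKancZ par k₁ k₂ a₁ = a₂ := by
        rw [← hx₂, HancZ h x, hx₁]
      intro y hy
      simp only [mem_setOf_eq] at hy ⊢
      rw [HancZ h y, hy, hanc]
  · -- children exist
    intro k Q hQ
    obtain ⟨a, ha, rfl⟩ := hQ
    refine ⟨{x | HKs ρ c δ A par e (k+1) x = HKs ρ c δ A par e (k+1) a},
      ⟨HKs ρ c δ A par e (k+1) a, Hmem (k+1) a, rfl⟩, ?_⟩
    intro x hx
    simp only [mem_setOf_eq] at hx ⊢
    rw [← Hpar k x, hx, Hpar k a, Hself k a ha]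
  · -- unique parent
    intro k Q hQ
    obtain ⟨a, ha, rfl⟩ := hQ
    have ha' : a ∈ A ((k-1)+1) := by rw [show k-1+1 = k by ring]; exact ha
    have hparent := (hpar (k-1) a ha').1
    have hincl : {x | HKs ρ c δ A par e k x = a} ⊆
        {x | HKs ρ c δ A par e (k-1) x = par (k-1) a} := by
      intro x hx
      simp only [mem_setOf_eq] at hx ⊢
      have hh := Hpar (k-1) x
      rw [show k-1+1 = k by ring] at hh
      rw [← hh, hx]
    refine ⟨{x | HKs ρ c δ A par e (k-1) x = par (k-1) a},
      ⟨⟨par (k-1) a, hparent, rfl⟩, hincl⟩, ?_⟩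
    rintro Q' ⟨⟨a'', ha'', rfl⟩, hsub⟩
    have haQ : a ∈ {x | HKs ρ c δ A par e k x = a} := Hself k a ha
    have h1'' : HKs ρ c δ A par e (k-1) a = a'' := hsub haQ
    have h2'' : HKs ρ c δ A par e (k-1) a = par (k-1) a := hincl haQ
    rw [← h1'', h2'']
  · -- measure of children
    intro k Q₁ hQ₁ Q₂ hQ₂ hsub
    obtain ⟨a, ha, rfl⟩ := hQ₁
    obtain ⟨b, hb, rfl⟩ := hQ₂
    have hbQ2 : b ∈ {x | HKs ρ c δ A par e (k+1) x = b} := Hself (k+1) b hb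
    have hbQ1 : HKs ρ c δ A par e k b = a := hsub hbQ2
    have hba : ρ b a < c * δ^k := by
      have := Hadm k b
      rwa [hbQ1] at this
    have houter : {x | HKs ρ c δ A par e k x = a} ⊆ {y | ρ b y < 2*κ*c*δ^k} := by
      intro y hy
      simp only [mem_setOf_eq] at hy ⊢
      have hya : ρ y a < c * δ^k := by
        have := Hadm k y
        rwa [hy] at this
      have htri : ρ b y ≤ κ * (ρ b a + ρ a y) := hρ_tri b y a
      rw [hρ_symm a y] at htri
      nlinarith
    have hrad : 2*κ*c*δ^k ≤ 2^N' * δ^(k+1) := by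
      have hz : (δ:ℝ) ^ (k+1) = δ ^ k * δ := zpow_add_one₀ (ne_of_gt hδ0) k
      rw [hz]
      have hδk : (0:ℝ) < δ^k := zpow_pos hδ0 k
      rw [div_lt_iff₀ hδ0] at hN'
      nlinarith
    have hδk1 : (0:ℝ) < δ^(k+1) := zpow_pos hδ0 _
    have hinner2 : {y | ρ b y < δ^(k+1)} ⊆ {x | HKs ρ c δ A par e (k+1) x = b} :=
      Hinner (k+1) b hb
    have hchain : μ {x | HKs ρ c δ A par e k x = a} ≤
        (ENNReal.ofReal D)^N' * μ {x | HKs ρ c δ A par e (k+1) x = b} := by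
      calc μ {x | HKs ρ c δ A par e k x = a}
          ≤ μ {y | ρ b y < 2*κ*c*δ^k} := measure_mono houter
        _ ≤ μ {y | ρ b y < 2^N' * δ^(k+1)} :=
            measure_mono (fun y hy => lt_of_lt_of_le hy hrad)
        _ ≤ (ENNReal.ofReal D)^N' * μ {y | ρ b y < δ^(k+1)} :=
            HKdoub_iter hdoubling N' b (δ^(k+1)) hδk1
        _ ≤ (ENNReal.ofReal D)^N' * μ {x | HKs ρ c δ A par e (k+1) x = b} :=
            mul_le_mul_right (measure_mono hinner2) _
    calc ENNReal.ofReal (1/(2*D^N')) * μ {x | HKs ρ c δ A par e k x = a}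
        ≤ ENNReal.ofReal (1/(2*D^N')) *
          ((ENNReal.ofReal D)^N' * μ {x | HKs ρ c δ A par e (k+1) x = b}) :=
          mul_le_mul_right hchain _
      _ = (ENNReal.ofReal (1/(2*D^N')) * (ENNReal.ofReal D)^N') *
          μ {x | HKs ρ c δ A par e (k+1) x = b} := by rw [mul_assoc]
      _ ≤ 1 * μ {x | HKs ρ c δ A par e (k+1) x = b} := by
          refine mul_le_mul_left ?_ _
          rw [← ENNReal.ofReal_pow hD.le, ← ENNReal.ofReal_mul (by positivity)]
          have : (1/(2*D^N')) * D^N' = 1/2 := by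
            field_simp
          rw [this]
          exact ENNReal.ofReal_le_one.mpr (by norm_num)
      _ = μ {x | HKs ρ c δ A par e (k+1) x = b} := one_mul _
  · -- sandwich
    intro k Q hQ
    obtain ⟨a, ha, rfl⟩ := hQ
    have houterFn : ∀ z : X, z ∈ {x | HKs ρ c δ A par e k x = a} →
        {x | HKs ρ c δ A par e k x = a} ⊆ {y | ρ z y < 2*κ*c * δ ^ k} := by
      intro z hz y hy
      simp only [mem_setOf_eq] at hz hy ⊢
      have hza : ρ z a < c * δ^k := by
        have := Hadm k z; rwa [hz] at this
      have hya : ρ y a < c * δ^k := by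
        have := Hadm k y; rwa [hy] at this
      have htri : ρ z y ≤ κ * (ρ z a + ρ a y) := hρ_tri z y a
      rw [hρ_symm a y] at htri
      nlinarith
    have hex : ∃ z, z ∈ {x | HKs ρ c δ A par e k x = a} ∧ ∀ (j : ℤ) (b : X),
        b ∈ A j ∧ {x | HKs ρ c δ A par e k x = a} = {x | HKs ρ c δ A par e j x = b} →
        ∀ y : X, ρ z y < δ^j → y ∈ {x | HKs ρ c δ A par e k x = a} := by
      by_cases h1c : ∃ p : ℤ × X,
          (p.2 ∈ A p.1 ∧ {x | HKs ρ c δ A par e k x = a} =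
            {x | HKs ρ c δ A par e p.1 x = p.2}) ∧
          ∀ q : ℤ × X, (q.2 ∈ A q.1 ∧ {x | HKs ρ c δ A par e k x = a} =
            {x | HKs ρ c δ A par e q.1 x = q.2}) → p.1 ≤ q.1
      · obtain ⟨p, ⟨hpA, hpQ⟩, hmin⟩ := h1c
        refine ⟨p.2, ?_, ?_⟩
        · rw [hpQ]
          exact Hself p.1 p.2 hpA
        · intro j b ⟨hbA, hbQ⟩ y hy
          have hpj : p.1 ≤ j := hmin (j, b) ⟨hbA, hbQ⟩
          have hδle : δ^j ≤ δ^(p.1) :=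
            zpow_le_zpow_right_of_le_one₀ hδ0 hδ1.le hpj
          have hy' : ρ p.2 y < δ^(p.1) := lt_of_lt_of_le hy hδle
          rw [hpQ]
          exact Hinner p.1 p.2 hpA hy'
      · -- no minimal level: the cube is all of X
        have hall : ∀ y : X, y ∈ {x | HKs ρ c δ A par e k x = a} := by
          push_neg at h1c
          have hdesc : ∀ n : ℕ, ∃ q : ℤ × X,
              (q.2 ∈ A q.1 ∧ {x | HKs ρ c δ A par e k x = a} =
                {x | HKs ρ c δ A par e q.1 x = q.2}) ∧ q.1 ≤ k - n := by
            intro n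
            induction n with
            | zero => exact ⟨(k, a), ⟨ha, rfl⟩, by simp⟩
            | succ n ih =>
              obtain ⟨q, hq, hqk⟩ := ih
              obtain ⟨q', hq', hq'lt⟩ := h1c q hq
              exact ⟨q', hq', by push_cast; omega⟩
          intro y
          set Cy := κ*(c*δ^k + ρ a y) + 1 with hCy
          have hCy0 : 0 < Cy := by
            have := hρ_nonneg a y
            have := zpow_pos hδ0 k
            positivity
          obtain ⟨n, hn⟩ : ∃ n : ℕ, Cy / δ^k < (1/δ)^n :=
            pow_unbounded_of_one_lt _ (by rw [one_lt_div hδ0]; exact hδ1)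
          have hCyδ : Cy < δ^(k - (n:ℤ)) := by
            have hδk : (0:ℝ) < δ^k := zpow_pos hδ0 k
            have hδn : (0:ℝ) < δ^(n:ℕ) := pow_pos hδ0 n
            have hzz : δ^(k - (n:ℤ)) = δ^k / δ^(n:ℕ) := by
              rw [zpow_sub₀ (ne_of_gt hδ0)]
              norm_num [zpow_natCast]
            rw [hzz, lt_div_iff₀ hδn]
            rw [div_lt_iff₀ hδk] at hn
            have hh : (1/δ:ℝ)^n * δ^n = 1 := by
              rw [one_div, inv_pow, inv_mul_cancel₀ (ne_of_gt hδn)]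
            calc Cy * δ^n < ((1/δ)^n * δ^k) * δ^n := mul_lt_mul_of_pos_right hn hδn
              _ = ((1/δ)^n * δ^n) * δ^k := by ring
              _ = δ^k := by rw [hh, one_mul]
          obtain ⟨q, ⟨hqA, hqQ⟩, hqk⟩ := hdesc n
          have hbQ : q.2 ∈ {x | HKs ρ c δ A par e k x = a} := by
            rw [hqQ]
            exact Hself q.1 q.2 hqA
          have hba : ρ q.2 a < c * δ^k := by
            have := Hadm k q.2
            rwa [hbQ] at this
          have hby : ρ q.2 y < δ^(q.1) := by
            have htri : ρ q.2 y ≤ κ * (ρ q.2 a + ρ a y) := hρ_tri q.2 y a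
            have hδle : δ^(k - (n:ℤ)) ≤ δ^(q.1) :=
              zpow_le_zpow_right_of_le_one₀ hδ0 hδ1.le hqk
            have hlt2 : κ * (ρ q.2 a + ρ a y) < Cy := by
              rw [hCy]
              nlinarith [hρ_nonneg a y]
            linarith
          rw [hqQ]
          exact Hinner q.1 q.2 hqA hby
        exact ⟨a, hall a, fun j b hjb y hy => hall y⟩
    have hspec := Classical.epsilon_spec hex
    beta_reduce
    refine ⟨?_, ?_⟩
    · intro y hy
      simp only [mem_setOf_eq] at hy
      exact hspec.2 k a ⟨ha, rfl⟩ y hy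
    · exact houterFn _ hspec.1
end

section
/- 3-uniform perfectness: Let V ⊆ ℝ^n be an open, path-connected set and let ρ be a metric on V with diam_ρ(V) := sup_{x,y∈V} ρ(x,y) < ∞. Assume that for every compact subset K ⊆ V there exist constants C₁, C₂ > 0 and d̃ ≥ 1 such that C₁·|x − y| ≤ ρ(x, y) ≤ C₂·|x − y|^{1/d̃} for all x, y ∈ K (so that on compact subsets the topology induced by ρ coincides with the Euclidean topology). Then (V, ρ) is 3-uniformly perfect: for every x ∈ V and every r with 0 < r < diam_ρ(V), there exists y ∈ V such that r/3 ≤ ρ(x, y) ≤ r. -/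
open Set

/-- **3-uniform perfectness.** Let `V ⊆ ℝⁿ` be open and path-connected, and let `ρ` be a
metric on `V` whose diameter is finite, which on every compact subset of `V` is comparable
to the Euclidean metric in the sense `C₁·|x−y| ≤ ρ(x,y) ≤ C₂·|x−y|^{1/d̃}`. Then for every
`x ∈ V` and every `0 < r < diam_ρ(V)` there exists `y ∈ V` with `r/3 ≤ ρ(x,y) ≤ r`. -/
theorem three_uniformly_perfect
    {n : ℕ}
    (V : Set (EuclideanSpace ℝ (Fin n)))
    (hVopen : IsOpen V) (hVconn : IsPathConnected V)
    (ρ : EuclideanSpace ℝ (Fin n) → EuclideanSpace ℝ (Fin n) → ℝ)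
    -- `ρ` is a metric on `V`
    (hρ_nonneg : ∀ x ∈ V, ∀ y ∈ V, 0 ≤ ρ x y)
    (hρ_eq : ∀ x ∈ V, ∀ y ∈ V, (ρ x y = 0 ↔ x = y))
    (hρ_symm : ∀ x ∈ V, ∀ y ∈ V, ρ x y = ρ y x)
    (hρ_tri : ∀ x ∈ V, ∀ y ∈ V, ∀ z ∈ V, ρ x y ≤ ρ x z + ρ z y)
    -- the diameter of `V` with respect to `ρ` is finite
    (hbdd : BddAbove {d : ℝ | ∃ x ∈ V, ∃ y ∈ V, d = ρ x y})
    -- local comparability with the Euclidean metric on compact subsets of `V`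
    (hcomp : ∀ K : Set (EuclideanSpace ℝ (Fin n)), K ⊆ V → IsCompact K →
      ∃ C₁ C₂ dtil : ℝ, 0 < C₁ ∧ 0 < C₂ ∧ 1 ≤ dtil ∧
        ∀ x ∈ K, ∀ y ∈ K,
          C₁ * ‖x - y‖ ≤ ρ x y ∧ ρ x y ≤ C₂ * ‖x - y‖ ^ (1 / dtil)) :
    ∀ x ∈ V, ∀ r : ℝ, 0 < r → r < sSup {d : ℝ | ∃ x ∈ V, ∃ y ∈ V, d = ρ x y} →
      ∃ y ∈ V, r / 3 ≤ ρ x y ∧ ρ x y ≤ r := by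
  intro x hx r hr hrs
  -- find two points at ρ-distance > r
  have hne : {d : ℝ | ∃ x ∈ V, ∃ y ∈ V, d = ρ x y}.Nonempty := ⟨ρ x x, x, hx, x, hx, rfl⟩
  obtain ⟨d, hdS, hrd⟩ := exists_lt_of_lt_csSup hne hrs
  obtain ⟨a, ha, b, hb, rfl⟩ := hdS
  -- one of a, b is at ρ-distance > r/2 from x
  obtain ⟨z, hz, hxz⟩ : ∃ z ∈ V, r / 2 < ρ x z := by
    by_contra h
    push_neg at h
    have h1 := h a ha
    have h2 := h b hb
    have := hρ_tri a ha b hb x hx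
    have := hρ_symm a ha x hx
    linarith
  -- join x and z by a path in V
  obtain ⟨γ, hγ⟩ := (hVconn.joinedIn x hx z hz)
  have hKsub : Set.range γ ⊆ V := by
    rintro _ ⟨t, rfl⟩; exact hγ t
  have hKcpt : IsCompact (Set.range γ) := isCompact_range γ.continuous
  obtain ⟨C₁, C₂, dtil, hC₁, hC₂, hdtil, hK⟩ := hcomp _ hKsub hKcpt
  have hdpos : (0:ℝ) < 1 / dtil := by positivity
  -- the function t ↦ ρ x (γ t) is continuous
  set f : unitInterval → ℝ := fun t => ρ x (γ t) with hf
  have hfin : ∀ t, γ t ∈ V := hγ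
  have hcont : Continuous f := by
    rw [continuous_iff_continuousAt]
    intro t
    rw [ContinuousAt, tendsto_iff_dist_tendsto_zero]
    have hbound : ∀ s, dist (f s) (f t) ≤ C₂ * ‖γ t - γ s‖ ^ (1 / dtil) := by
      intro s
      have h1 : f s ≤ f t + ρ (γ t) (γ s) := by
        have := hρ_tri x hx (γ s) (hfin s) (γ t) (hfin t)
        have := hρ_symm (γ t) (hfin t) (γ s) (hfin s)
        simp only [hf]; linarith
      have h2 : f t ≤ f s + ρ (γ t) (γ s) := by
        have := hρ_tri x hx (γ t) (hfin t) (γ s) (hfin s)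
        have := hρ_symm (γ t) (hfin t) (γ s) (hfin s)
        simp only [hf]; linarith
      have h3 : ρ (γ t) (γ s) ≤ C₂ * ‖γ t - γ s‖ ^ (1 / dtil) :=
        (hK (γ t) ⟨t, rfl⟩ (γ s) ⟨s, rfl⟩).2
      rw [Real.dist_eq, abs_le]
      constructor <;> linarith
    have hg : Filter.Tendsto (fun s => C₂ * ‖γ t - γ s‖ ^ (1 / dtil)) (nhds t)
        (nhds 0) := by
      have hnorm : Filter.Tendsto (fun s => ‖γ t - γ s‖) (nhds t) (nhds 0) := by
        have : Filter.Tendsto (fun s => γ t - γ s) (nhds t) (nhds (γ t - γ t)) :=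
          (continuous_const.sub γ.continuous).tendsto t
        simpa using this.norm
      have hrpow : Filter.Tendsto (fun u : ℝ => u ^ (1 / dtil)) (nhds 0)
          (nhds ((0:ℝ) ^ (1 / dtil))) :=
        (Real.continuousAt_rpow_const 0 (1 / dtil) (Or.inr hdpos.le)).tendsto
      have := (hrpow.comp hnorm).const_mul C₂
      simpa [one_div, Real.zero_rpow (show dtil⁻¹ ≠ 0 by positivity)] using this
    exact squeeze_zero (fun s => dist_nonneg) hbound hg
  -- intermediate value theorem
  have hsub := intermediate_value_univ (0 : unitInterval) 1 hcont
  have hmem : r / 2 ∈ Set.Icc (f 0) (f 1) := by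
    constructor
    · have : f 0 = 0 := by
        simp only [hf]
        have : γ 0 = x := γ.source
        rw [this]
        exact (hρ_eq x hx x hx).2 rfl
      rw [this]; linarith
    · have : f 1 = ρ x z := by simp only [hf]; rw [γ.target]
      rw [this]; linarith
  obtain ⟨t, ht⟩ := hsub hmem
  refine ⟨γ t, hfin t, ?_, ?_⟩ <;> rw [show ρ x (γ t) = f t from rfl, ht] <;> linarith
end
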